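/- arXiv:2201.07905 — 7 statements merged into one kernel-verified Lean document; each statement's English description precedes it below -/
import Mathlib

section
/- For every cluster set C, the weighted Robinson–Foulds objective decomposes cluster-by-cluster: f(C) = Σ_{c ∈ C} (W − s(c)) + Σ_{c ∈ (C₁ ∪ … ∪ C_p) \ C} s(c). -/
/-- Two clusters are *compatible* if they are disjoint or one contains the other. -/
def compatible {L : Type*} [DecidableEq L] (c₁ c₂ : Finset L) : Prop :=
  c₁ ∩ c₂ = ∅ ∨ c₁ ⊆ c₂ ∨ c₂ ⊆ c₁

/-- A cluster set is *laminar* if any two of its elements are compatible. -/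
def laminar {L : Type*} [DecidableEq L] (S : Finset (Finset L)) : Prop :=
  ∀ c₁ ∈ S, ∀ c₂ ∈ S, compatible c₁ c₂

/-- The weighted support `s(c) = Σ_k w_k · 𝟙(c ∈ C_k)` of a cluster `c`. -/
def supp {L : Type*} [DecidableEq L] {p : ℕ} (w : Fin p → ℝ)
    (C : Fin p → Finset (Finset L)) (c : Finset L) : ℝ :=
  ∑ k, if c ∈ C k then w k else 0

/-- The weighted Robinson–Foulds objective `f(X) = Σ_k w_k · |X Δ C_k|`. -/
def rfObj {L : Type*} [DecidableEq L] {p : ℕ} (w : Fin p → ℝ)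
    (C : Fin p → Finset (Finset L)) (X : Finset (Finset L)) : ℝ :=
  ∑ k, w k * ((symmDiff X (C k)).card : ℝ)

/-!
Double counting: `|X ∆ C_k|` counts the clusters of `X` missing from `C_k` and the clusters of
`C_k` missing from `X`, all of which lie in `X ⊔ (⋃ C_i \ X)`. Weighting by `w_k` and exchanging
the sums over `k` and over clusters gives the two sums of the decomposition.
-/

open Finset

theorem Finset.card_symmDiff_eq_sum_add_sum {α : Type*} [DecidableEq α] {X Y U : Finset α}
    (hY : Y ⊆ U) :
    #(symmDiff X Y) =
      (∑ c ∈ X, if c ∈ Y then 0 else 1) + ∑ c ∈ U \ X, if c ∈ Y then 1 else 0 := by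
  have hsub : symmDiff X Y ⊆ X ∪ U \ X := by
    rw [union_sdiff_self_eq_union, symmDiff_def, sup_eq_union]
    exact union_subset_union sdiff_subset (sdiff_subset.trans hY)
  rw [← inter_eq_right.2 hsub, ← filter_mem_eq_inter, card_filter, sum_union disjoint_sdiff]
  congr 1 <;> refine sum_congr rfl fun c hc => ?_ <;> simp_all [mem_symmDiff]

theorem Finset.mul_card_symmDiff_eq_sum_add_sum {α R : Type*} [DecidableEq α] [CommRing R]
    {X Y U : Finset α} (hY : Y ⊆ U) (a : R) :
    a * #(symmDiff X Y) =
      (∑ c ∈ X, (a - if c ∈ Y then a else 0)) + ∑ c ∈ U \ X, if c ∈ Y then a else 0 := by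
  rw [card_symmDiff_eq_sum_add_sum hY]
  push_cast
  rw [mul_add, mul_sum, mul_sum]
  congr 1 <;> refine sum_congr rfl fun c _ => ?_ <;> split_ifs <;> simp

theorem rfObj_decomposition_general {L : Type*} [DecidableEq L] {p : ℕ}
    (w : Fin p → ℝ) (C : Fin p → Finset (Finset L))
    (X : Finset (Finset L)) :
    rfObj w C X =
      (∑ c ∈ X, ((∑ k, w k) - supp w C c)) +
      ∑ c ∈ (Finset.univ.biUnion C) \ X, supp w C c := by
  unfold rfObj supp
  rw [sum_congr rfl fun k _ =>
      mul_card_symmDiff_eq_sum_add_sum (subset_biUnion_of_mem C (mem_univ k)) (w k),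
    sum_add_distrib, sum_comm, sum_comm (s := univ)]
  simp_rw [sum_sub_distrib]

/-- the weighted RF objective decomposes cluster-by-cluster:
`f(C) = Σ_{c ∈ C} (W − s(c)) + Σ_{c ∈ (C₁ ∪ … ∪ C_p) \ C} s(c)`. -/
theorem rfObj_decomposition {L : Type*} [DecidableEq L] {p : ℕ}
    (w : Fin p → ℝ) (C : Fin p → Finset (Finset L))
    (hw : ∀ k, 0 < w k) (hCne : ∀ k, ∀ c ∈ C k, c.Nonempty)
    (X : Finset (Finset L)) (hXne : ∀ c ∈ X, c.Nonempty) :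
    rfObj w C X =
      (∑ c ∈ X, ((∑ k, w k) - supp w C c)) +
      ∑ c ∈ (Finset.univ.biUnion C) \ X, supp w C c :=
  rfObj_decomposition_general w C X
end

section
/- If a cluster c belongs to a cluster set C and s(c) < W/2, then f(C \ {c}) < f(C); dually, if c ∉ C and s(c) > W/2, then f(C ∪ {c}) < f(C). -/
/-
Toggling a single cluster `c` changes each `|X Δ C_k|` by exactly one, downwards iff afterwards `X`
and `C_k` agree on `c`. So inserting a missing `c` changes `f` by `Σ_k ±w_k = W - 2 s(c)` (sign `-`
exactly when `c ∈ C_k`), and erasing a present `c` changes it by `2 s(c) - W`.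
-/
namespace Finset

variable {α : Type*} [DecidableEq α]

theorem card_insert_symmDiff_of_notMem {a : α} {s : Finset α} (t : Finset α) (ha : a ∉ s) :
    ((symmDiff (insert a s) t).card : ℤ) = (symmDiff s t).card + if a ∈ t then -1 else 1 := by
  by_cases hat : a ∈ t
  · have hmem : a ∈ symmDiff s t := by simp [mem_symmDiff, ha, hat]
    have heq : symmDiff (insert a s) t = (symmDiff s t).erase a := by
      ext x
      by_cases hx : x = a <;> simp [mem_symmDiff, hx, ha, hat]
    rw [heq, card_erase_of_mem hmem, if_pos hat,
      Nat.cast_sub (card_pos.mpr ⟨a, hmem⟩)]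
    ring
  · have hnmem : a ∉ symmDiff s t := by simp [mem_symmDiff, ha, hat]
    have heq : symmDiff (insert a s) t = insert a (symmDiff s t) := by
      ext x
      by_cases hx : x = a <;> simp [mem_symmDiff, hx, ha, hat]
    rw [heq, card_insert_of_notMem hnmem, if_neg hat]
    push_cast
    ring

end Finset

section RobinsonFoulds

open Finset

variable {L : Type*} [DecidableEq L] {p : ℕ} (w : Fin p → ℝ) (C : Fin p → Finset (Finset L))

theorem sum_mul_sign_eq_sub_two_mul_supp (c : Finset L) :
    ∑ k, w k * (if c ∈ C k then -1 else 1) = ∑ k, w k - 2 * supp w C c := by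
  rw [supp, mul_sum, ← sum_sub_distrib]
  refine sum_congr rfl fun k _ => ?_
  split_ifs <;> ring

theorem rfObj_insert_of_notMem {X : Finset (Finset L)} {c : Finset L} (hc : c ∉ X) :
    rfObj w C (insert c X) = rfObj w C X + (∑ k, w k - 2 * supp w C c) := by
  rw [← sum_mul_sign_eq_sub_two_mul_supp, rfObj, rfObj, ← sum_add_distrib]
  refine sum_congr rfl fun k _ => ?_
  have hcard : ((symmDiff (insert c X) (C k)).card : ℝ)
      = (symmDiff X (C k)).card + if c ∈ C k then -1 else 1 := by
    exact_mod_cast card_insert_symmDiff_of_notMem (C k) hc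
  rw [hcard]
  ring

theorem rfObj_erase_of_mem {X : Finset (Finset L)} {c : Finset L} (hc : c ∈ X) :
    rfObj w C (X.erase c) = rfObj w C X - (∑ k, w k - 2 * supp w C c) := by
  have h := rfObj_insert_of_notMem w C (notMem_erase c X)
  rw [insert_erase hc] at h
  linarith

end RobinsonFoulds

theorem rfObj_erase_lt_and_insert_lt_general {L : Type*} [DecidableEq L] {p : ℕ}
    (w : Fin p → ℝ) (C : Fin p → Finset (Finset L))
    (X : Finset (Finset L))
    (c : Finset L) :
    (c ∈ X → supp w C c < (∑ k, w k) / 2 →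
      rfObj w C (X.erase c) < rfObj w C X) ∧
    (c ∉ X → (∑ k, w k) / 2 < supp w C c →
      rfObj w C (insert c X) < rfObj w C X) := by
  constructor
  · intro hcX hsupp
    rw [rfObj_erase_of_mem w C hcX]
    linarith
  · intro hcX hsupp
    rw [rfObj_insert_of_notMem w C hcX]
    linarith

/-- removing a cluster with minority support strictly decreases the
objective; dually, inserting a missing cluster with majority support strictly
decreases the objective. -/
theorem rfObj_erase_lt_and_insert_lt {L : Type*} [DecidableEq L] {p : ℕ}
    (w : Fin p → ℝ) (C : Fin p → Finset (Finset L))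
    (hw : ∀ k, 0 < w k) (hCne : ∀ k, ∀ c ∈ C k, c.Nonempty)
    (X : Finset (Finset L)) (hXne : ∀ c ∈ X, c.Nonempty)
    (c : Finset L) (hc : c.Nonempty) :
    (c ∈ X → supp w C c < (∑ k, w k) / 2 →
      rfObj w C (X.erase c) < rfObj w C X) ∧
    (c ∉ X → (∑ k, w k) / 2 < supp w C c →
      rfObj w C (insert c X) < rfObj w C X) :=
  rfObj_erase_lt_and_insert_lt_general w C X c
end

section
/- (Lemma 2, first part) If a cluster c satisfies s(c) > W/2, i.e., Σ_{k=1}^p w_k·𝟙(c ∈ C_k) > 0.5·Σ_{k=1}^p w_k, then c belongs to every optimal solution C*. -/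
/-! Since `|X Δ C_k| = |X| + |C_k| - 2 |X ∩ C_k|`, the objective is, up to a constant,
`Σ_{d ∈ X} (W - 2 s(d))`. A majority cluster `c` therefore has negative cost, while a cluster
incompatible with `c` lies in no `C_k` together with `c`, so its support is at most
`W - s(c) < W/2` and its cost is positive. If `c ∉ C*`, replacing the clusters of `C*` that are
incompatible with `c` by `c` itself gives a laminar cluster set with strictly smaller objective. -/

open Finset

section Clusters

variable {L : Type*} [DecidableEq L]

instance (c₁ c₂ : Finset L) : Decidable (compatible c₁ c₂) :=
  inferInstanceAs (Decidable (_ ∨ _ ∨ _))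

lemma compatible_comm {c₁ c₂ : Finset L} : compatible c₁ c₂ ↔ compatible c₂ c₁ := by
  unfold compatible; rw [inter_comm]; tauto

lemma compatible_self (c : Finset L) : compatible c c :=
  Or.inr (Or.inl subset_rfl)

lemma laminar.mono {S T : Finset (Finset L)} (hS : laminar S) (hTS : T ⊆ S) : laminar T :=
  fun c₁ h₁ c₂ h₂ => hS c₁ (hTS h₁) c₂ (hTS h₂)

lemma laminar_insert {S : Finset (Finset L)} {c : Finset L} (hS : laminar S)
    (hc : ∀ d ∈ S, compatible c d) : laminar (insert c S) := by
  intro c₁ h₁ c₂ h₂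
  rw [mem_insert] at h₁ h₂
  rcases h₁ with rfl | h₁ <;> rcases h₂ with rfl | h₂
  · exact compatible_self _
  · exact hc _ h₂
  · exact compatible_comm.mp (hc _ h₁)
  · exact hS _ h₁ _ h₂

lemma card_symmDiff_add_two_mul_card_inter (s t : Finset L) :
    #(symmDiff s t) + 2 * #(s ∩ t) = #s + #t := by
  rw [symmDiff_eq_sup_sdiff_inf, sup_eq_union, inf_eq_inter,
    card_sdiff_of_subset inter_subset_union, ← card_union_add_card_inter]
  have := card_le_card (inter_subset_union (s := s) (t := t))
  omega

variable {p : ℕ} (w : Fin p → ℝ) (C : Fin p → Finset (Finset L))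

lemma rfObj_eq_sum_add (X : Finset (Finset L)) :
    rfObj w C X = ∑ d ∈ X, (∑ k, w k - 2 * supp w C d) + ∑ k, w k * #(C k) := by
  have hcard (k : Fin p) : (#(symmDiff X (C k)) : ℝ) = #X + #(C k) - 2 * #(X ∩ C k) := by
    rw [eq_sub_iff_add_eq]; exact_mod_cast card_symmDiff_add_two_mul_card_inter X (C k)
  have hinter (k : Fin p) : (#(X ∩ C k) : ℝ) = ∑ d ∈ X, if d ∈ C k then 1 else 0 := by
    rw [sum_boole, filter_mem_eq_inter]
  have hsupp : ∑ k, w k * #(X ∩ C k) = ∑ d ∈ X, supp w C d := by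
    simp only [supp, hinter, mul_sum, mul_boole]
    exact sum_comm
  simp only [rfObj, hcard, mul_sub, mul_add, sum_sub_distrib, sum_add_distrib, ← sum_mul,
    mul_left_comm _ (2 : ℝ), ← mul_sum, hsupp, sum_const, nsmul_eq_mul]
  ring

lemma supp_add_supp_le_of_not_compatible (hw : ∀ k, 0 ≤ w k) (hC : ∀ k, laminar (C k))
    {c d : Finset L} (hcd : ¬ compatible c d) : supp w C c + supp w C d ≤ ∑ k, w k := by
  rw [supp, supp, ← sum_add_distrib]
  refine sum_le_sum fun k _ => ?_
  by_cases hc : c ∈ C k <;> by_cases hd : d ∈ C k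
  · exact absurd (hC k c hc d hd) hcd
  all_goals simp [hc, hd, hw k]

end Clusters

theorem majority_mem_optimal_general {L : Type*} [DecidableEq L] {p : ℕ}
    (w : Fin p → ℝ) (C : Fin p → Finset (Finset L))
    (hw : ∀ k, 0 < w k)
    (hClam : ∀ k, laminar (C k))
    (c : Finset L) (hc : c.Nonempty)
    (hmaj : (∑ k, w k) / 2 < supp w C c)
    (Cstar : Finset (Finset L)) (hne : ∀ c' ∈ Cstar, c'.Nonempty)
    (hlam : laminar Cstar)
    (hopt : ∀ X : Finset (Finset L), (∀ c' ∈ X, c'.Nonempty) → laminar X →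
      rfObj w C Cstar ≤ rfObj w C X) :
    c ∈ Cstar := by
  by_contra hcC
  set S := Cstar.filter (compatible c)
  have hcS : c ∉ S := fun h => hcC (mem_filter.mp h).1
  have hXne : ∀ d ∈ insert c S, d.Nonempty := by
    intro d hd
    rcases mem_insert.mp hd with rfl | hd
    exacts [hc, hne d (mem_filter.mp hd).1]
  have hle := hopt _ hXne <|
    laminar_insert (hlam.mono (filter_subset _ _)) fun d hd => (mem_filter.mp hd).2
  have hbad : 0 ≤ ∑ d ∈ Cstar.filter (¬ compatible c ·), (∑ k, w k - 2 * supp w C d) :=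
    sum_nonneg fun d hd => by
      have := supp_add_supp_le_of_not_compatible w C (fun k => (hw k).le) hClam
        (mem_filter.mp hd).2
      linarith
  rw [rfObj_eq_sum_add, rfObj_eq_sum_add, sum_insert hcS,
    ← sum_filter_add_sum_filter_not Cstar (compatible c)] at hle
  linarith

/-- Lemma 2, first part: a cluster with majority weighted support,
`s(c) > W/2`, belongs to every optimal solution `C*`. -/
theorem majority_mem_optimal {L : Type*} [DecidableEq L] {p : ℕ}
    (w : Fin p → ℝ) (C : Fin p → Finset (Finset L))
    (hw : ∀ k, 0 < w k) (hCne : ∀ k, ∀ c ∈ C k, c.Nonempty)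
    (hClam : ∀ k, laminar (C k))
    (c : Finset L) (hc : c.Nonempty)
    (hmaj : (∑ k, w k) / 2 < supp w C c)
    (Cstar : Finset (Finset L)) (hne : ∀ c' ∈ Cstar, c'.Nonempty)
    (hlam : laminar Cstar)
    (hopt : ∀ X : Finset (Finset L), (∀ c' ∈ X, c'.Nonempty) → laminar X →
      rfObj w C Cstar ≤ rfObj w C X) :
    c ∈ Cstar :=
  majority_mem_optimal_general w C hw hClam c hc hmaj Cstar hne hlam hopt
end

section
/- (Lemma 3) If clusters c₁ and c₂ both have majority weighted support, i.e., s(c₁) > W/2 and s(c₂) > W/2, then c₁ and c₂ are compatible. -/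
/-! Each laminar `C k` contains at most one of two incompatible clusters, so their supports
add up to at most `W`; they cannot both exceed `W / 2`. -/

theorem supp_add_supp_le_of_exclusive {L : Type*} [DecidableEq L] {p : ℕ}
    {w : Fin p → ℝ} {C : Fin p → Finset (Finset L)} {c₁ c₂ : Finset L}
    (hw : ∀ k, 0 ≤ w k) (hexcl : ∀ k, c₁ ∈ C k → c₂ ∉ C k) :
    supp w C c₁ + supp w C c₂ ≤ ∑ k, w k := by
  rw [supp, supp, ← Finset.sum_add_distrib]
  refine Finset.sum_le_sum fun k _ => ?_
  by_cases h₁ : c₁ ∈ C k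
  · simp [h₁, hexcl k h₁]
  · rw [if_neg h₁, zero_add]
    split_ifs <;> linarith [hw k]

theorem laminar.notMem_of_not_compatible {L : Type*} [DecidableEq L]
    {S : Finset (Finset L)} {c₁ c₂ : Finset L} (hS : laminar S) (hnc : ¬compatible c₁ c₂)
    (h₁ : c₁ ∈ S) : c₂ ∉ S :=
  fun h₂ => hnc (hS c₁ h₁ c₂ h₂)

theorem majority_majority_compatible_general {L : Type*} [DecidableEq L] {p : ℕ}
    (w : Fin p → ℝ) (C : Fin p → Finset (Finset L))
    (hw : ∀ k, 0 < w k)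
    (hClam : ∀ k, laminar (C k))
    (c₁ c₂ : Finset L)
    (hm₁ : (∑ k, w k) / 2 < supp w C c₁)
    (hm₂ : (∑ k, w k) / 2 < supp w C c₂) :
    compatible c₁ c₂ := by
  by_contra hnc
  have hle := supp_add_supp_le_of_exclusive (fun k => (hw k).le)
    fun k => (hClam k).notMem_of_not_compatible hnc
  linarith

/-- Lemma 3: two clusters each with majority weighted support,
`s(c₁) > W/2` and `s(c₂) > W/2`, are compatible. -/
theorem majority_majority_compatible {L : Type*} [DecidableEq L] {p : ℕ}
    (w : Fin p → ℝ) (C : Fin p → Finset (Finset L))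
    (hw : ∀ k, 0 < w k) (hCne : ∀ k, ∀ c ∈ C k, c.Nonempty)
    (hClam : ∀ k, laminar (C k))
    (c₁ c₂ : Finset L) (h₁ : c₁.Nonempty) (h₂ : c₂.Nonempty)
    (hm₁ : (∑ k, w k) / 2 < supp w C c₁)
    (hm₂ : (∑ k, w k) / 2 < supp w C c₂) :
    compatible c₁ c₂ :=
  majority_majority_compatible_general w C hw hClam c₁ c₂ hm₁ hm₂
end

section
/- The majority cluster set M⁺ = {c ∈ C₁ ∪ … ∪ C_p : s(c) > W/2} is laminar, i.e., any two of its elements are compatible. -/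
attribute [local instance] Classical.propDecidable

theorem Finset.exists_and_of_sum_lt_sum_filter_add_sum_filter {ι M : Type*}
    [AddCommMonoid M] [PartialOrder M] [IsOrderedAddMonoid M]
    {s : Finset ι} {w : ι → M} {P Q : ι → Prop} [DecidablePred P] [DecidablePred Q]
    (hw : ∀ i ∈ s, 0 ≤ w i)
    (h : ∑ i ∈ s, w i < ∑ i ∈ s with P i, w i + ∑ i ∈ s with Q i, w i) :
    ∃ i ∈ s, P i ∧ Q i := by
  by_contra! hPQ
  have hdisj : Disjoint (s.filter P) (s.filter Q) :=
    Finset.disjoint_filter.2 fun i hi hP hQ => hPQ i hi hP hQ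
  refine h.not_ge ?_
  rw [← Finset.sum_union hdisj]
  exact Finset.sum_le_sum_of_subset_of_nonneg
    (Finset.union_subset (Finset.filter_subset _ _) (Finset.filter_subset _ _))
    fun i hi _ => hw i hi

theorem supp_eq_sum_filter {L : Type*} [DecidableEq L] {p : ℕ} (w : Fin p → ℝ)
    (C : Fin p → Finset (Finset L)) (c : Finset L) :
    supp w C c = ∑ k with c ∈ C k, w k :=
  (Finset.sum_filter _ _).symm

theorem exists_mem_mem_of_half_lt_supp {L : Type*} [DecidableEq L] {p : ℕ}
    {w : Fin p → ℝ} {C : Fin p → Finset (Finset L)} {c₁ c₂ : Finset L}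
    (hw : ∀ k, 0 ≤ w k) (h₁ : (∑ k, w k) / 2 < supp w C c₁)
    (h₂ : (∑ k, w k) / 2 < supp w C c₂) :
    ∃ k, c₁ ∈ C k ∧ c₂ ∈ C k := by
  rw [supp_eq_sum_filter] at h₁ h₂
  obtain ⟨k, -, hk⟩ := Finset.exists_and_of_sum_lt_sum_filter_add_sum_filter
    (P := (c₁ ∈ C ·)) (Q := (c₂ ∈ C ·)) (fun k _ => hw k) (by linarith)
  exact ⟨k, hk⟩

theorem majority_set_laminar_general {L : Type*} [DecidableEq L] {p : ℕ}
    (w : Fin p → ℝ) (C : Fin p → Finset (Finset L))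
    (hw : ∀ k, 0 < w k)
    (hClam : ∀ k, laminar (C k)) :
    laminar ((Finset.univ.biUnion C).filter
      (fun c => (∑ k, w k) / 2 < supp w C c)) := by
  intro c₁ h₁ c₂ h₂
  rw [Finset.mem_filter] at h₁ h₂
  obtain ⟨k, hk₁, hk₂⟩ := exists_mem_mem_of_half_lt_supp (fun k => (hw k).le) h₁.2 h₂.2
  exact hClam k c₁ hk₁ c₂ hk₂

/-- the majority cluster set
`M⁺ = {c ∈ C₁ ∪ … ∪ C_p : s(c) > W/2}` is laminar. -/
theorem majority_set_laminar {L : Type*} [DecidableEq L] {p : ℕ}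
    (w : Fin p → ℝ) (C : Fin p → Finset (Finset L))
    (hw : ∀ k, 0 < w k) (hCne : ∀ k, ∀ c ∈ C k, c.Nonempty)
    (hClam : ∀ k, laminar (C k)) :
    laminar ((Finset.univ.biUnion C).filter
      (fun c => (∑ k, w k) / 2 < supp w C c)) :=
  majority_set_laminar_general w C hw hClam
end

section
/- If c₁ and c₂ are distinct incompatible clusters each with exactly half weighted support, s(c₁) = s(c₂) = W/2, then their supporting index sets are complementary: {k ∈ {1,…,p} : c₂ ∈ C_k} = {1,…,p} \ {k ∈ {1,…,p} : c₁ ∈ C_k}. -/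
theorem laminar.not_mem_and_mem_of_not_compatible {L : Type*} [DecidableEq L]
    {S : Finset (Finset L)} (hS : laminar S) {c₁ c₂ : Finset L}
    (hinc : ¬ compatible c₁ c₂) : ¬ (c₁ ∈ S ∧ c₂ ∈ S) :=
  fun ⟨h₁, h₂⟩ ↦ hinc (hS c₁ h₁ c₂ h₂)

/-- Pointwise the two indicator terms add up to at most `w k`, so equality of the totals
forces equality at every index, and positivity of `w k` then rules out that neither holds. -/
theorem iff_not_of_sum_ite_add_sum_ite_eq_sum {ι M : Type*} [Fintype ι] [AddCommMonoid M]
    [PartialOrder M] [IsOrderedCancelAddMonoid M] {w : ι → M} (hw : ∀ k, 0 < w k)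
    {P Q : ι → Prop} [DecidablePred P] [DecidablePred Q] (hPQ : ∀ k, ¬ (P k ∧ Q k))
    (hsum : (∑ k, if P k then w k else 0) + (∑ k, if Q k then w k else 0) = ∑ k, w k)
    (k : ι) : Q k ↔ ¬ P k := by
  have hle : ∀ k ∈ Finset.univ, (if P k then w k else 0) + (if Q k then w k else 0) ≤ w k := by
    intro k _
    by_cases hP : P k
    · have hQ : ¬ Q k := fun hQ ↦ hPQ k ⟨hP, hQ⟩
      simp [hP, hQ]
    · by_cases hQ : Q k <;> simp [hP, hQ, (hw k).le]
  have heq := (Finset.sum_eq_sum_iff_of_le hle).mp (by rwa [← Finset.sum_add_distrib] at hsum)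
    k (Finset.mem_univ k)
  refine ⟨fun hQ hP ↦ hPQ k ⟨hP, hQ⟩, fun hP ↦ by_contra fun hQ ↦ ?_⟩
  simp only [hP, hQ, if_false, add_zero] at heq
  exact (hw k).ne heq

theorem half_half_incompatible_complementary_general {L : Type*} [DecidableEq L] {p : ℕ}
    (w : Fin p → ℝ) (C : Fin p → Finset (Finset L))
    (hw : ∀ k, 0 < w k)
    (hClam : ∀ k, laminar (C k))
    (c₁ c₂ : Finset L)
    (hinc : ¬ compatible c₁ c₂)
    (hs₁ : supp w C c₁ = (∑ k, w k) / 2)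
    (hs₂ : supp w C c₂ = (∑ k, w k) / 2) :
    {k : Fin p | c₂ ∈ C k} = Set.univ \ {k : Fin p | c₁ ∈ C k} := by
  have hsum : supp w C c₁ + supp w C c₂ = ∑ k, w k := by rw [hs₁, hs₂]; ring
  ext k
  simpa using iff_not_of_sum_ite_add_sum_ite_eq_sum hw
    (fun k ↦ (hClam k).not_mem_and_mem_of_not_compatible hinc) hsum k

/-- distinct incompatible clusters each with exactly half weighted
support have complementary supporting index sets. -/
theorem half_half_incompatible_complementary {L : Type*} [DecidableEq L] {p : ℕ}
    (w : Fin p → ℝ) (C : Fin p → Finset (Finset L))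
    (hw : ∀ k, 0 < w k) (hCne : ∀ k, ∀ c ∈ C k, c.Nonempty)
    (hClam : ∀ k, laminar (C k))
    (c₁ c₂ : Finset L) (h₁ : c₁.Nonempty) (h₂ : c₂.Nonempty)
    (hne : c₁ ≠ c₂) (hinc : ¬ compatible c₁ c₂)
    (hs₁ : supp w C c₁ = (∑ k, w k) / 2)
    (hs₂ : supp w C c₂ = (∑ k, w k) / 2) :
    {k : Fin p | c₂ ∈ C k} = Set.univ \ {k : Fin p | c₁ ∈ C k} :=
  half_half_incompatible_complementary_general w C hw hClam c₁ c₂ hinc hs₁ hs₂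
end

section
/- The minimum of the weighted Robinson–Foulds objective over all cluster sets C equals Σ_{c ∈ C₁ ∪ … ∪ C_p} min(s(c), W − s(c)), and this minimum is attained by the laminar majority set M⁺ = {c ∈ C₁ ∪ … ∪ C_p : s(c) > W/2}; in particular the minimum over all cluster sets coincides with the minimum over laminar cluster sets. -/
attribute [local instance] Classical.propDecidable

/-!
Exchanging the two summations in `f(X) = Σ_k w_k |X Δ C_k|` splits the objective cluster by
cluster: a cluster `c` outside `X` costs the weight `s(c)` of the inputs containing it, a
cluster inside `X` costs the weight `W − s(c)` of the inputs missing it, and clusters in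
neither `X` nor any `C_k` cost nothing. Each cluster therefore costs at least
`min(s(c), W − s(c))`, with equality exactly when `c ∈ X ↔ s(c) > W/2`, which `M⁺` achieves.
`M⁺` is laminar because two clusters of support above `W/2` must occur together in some `C_k`.
-/

namespace WeightedRF

variable {L : Type*} [DecidableEq L] {p : ℕ} (w : Fin p → ℝ) (C : Fin p → Finset (Finset L))

lemma supp_nonneg (hw : ∀ k, 0 ≤ w k) (c : Finset L) : 0 ≤ supp w C c :=
  Finset.sum_nonneg fun k _ => by split_ifs <;> simp [hw k]

lemma supp_le_sum (hw : ∀ k, 0 ≤ w k) (c : Finset L) : supp w C c ≤ ∑ k, w k :=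
  Finset.sum_le_sum fun k _ => by split_ifs <;> simp [hw k]

lemma exists_mem_mem_of_sum_lt_supp_add_supp (hw : ∀ k, 0 ≤ w k) {c₁ c₂ : Finset L}
    (h : ∑ k, w k < supp w C c₁ + supp w C c₂) : ∃ k, c₁ ∈ C k ∧ c₂ ∈ C k := by
  by_contra! hno
  refine h.not_ge ?_
  rw [supp, supp, ← Finset.sum_add_distrib]
  refine Finset.sum_le_sum fun k _ => ?_
  by_cases h₁ : c₁ ∈ C k
  · simp [h₁, hno k h₁]
  · split_ifs <;> simp [hw k]

lemma laminar_filter_half_lt_supp (hw : ∀ k, 0 ≤ w k) (hClam : ∀ k, laminar (C k))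
    (U : Finset (Finset L)) : laminar (U.filter fun c => (∑ k, w k) / 2 < supp w C c) := by
  intro c₁ h₁ c₂ h₂
  obtain ⟨k, hk₁, hk₂⟩ := exists_mem_mem_of_sum_lt_supp_add_supp w C hw (c₁ := c₁) (c₂ := c₂)
    (by linarith [(Finset.mem_filter.mp h₁).2, (Finset.mem_filter.mp h₂).2])
  exact hClam k c₁ hk₁ c₂ hk₂

lemma sum_ite_mem_symmDiff (X : Finset (Finset L)) (c : Finset L) :
    (∑ k, if c ∈ symmDiff X (C k) then w k else 0) =
      if c ∈ X then (∑ k, w k) - supp w C c else supp w C c := by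
  split_ifs with hcX
  · rw [supp, ← Finset.sum_sub_distrib]
    refine Finset.sum_congr rfl fun k _ => ?_
    by_cases hck : c ∈ C k <;> simp [Finset.mem_symmDiff, hcX, hck]
  · refine Finset.sum_congr rfl fun k _ => ?_
    by_cases hck : c ∈ C k <;> simp [Finset.mem_symmDiff, hcX, hck]

lemma rfObj_eq_sum_ite {X U : Finset (Finset L)} (hXU : X ⊆ U) (hCU : ∀ k, C k ⊆ U) :
    rfObj w C X = ∑ c ∈ U, if c ∈ X then (∑ k, w k) - supp w C c else supp w C c := by
  have hcard : ∀ k, w k * ((symmDiff X (C k)).card : ℝ) =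
      ∑ c ∈ U, if c ∈ symmDiff X (C k) then w k else 0 := by
    intro k
    have hsub : symmDiff X (C k) ⊆ U :=
      symmDiff_le_sup.trans (Finset.union_subset hXU (hCU k))
    rw [Finset.sum_ite_mem, Finset.inter_eq_right.mpr hsub, Finset.sum_const, nsmul_eq_mul,
      mul_comm]
  simp only [rfObj, hcard]
  rw [Finset.sum_comm]
  exact Finset.sum_congr rfl fun c _ => sum_ite_mem_symmDiff w C X c

lemma min_le_ite {s W : ℝ} (P : Prop) [Decidable P] : min s (W - s) ≤ if P then W - s else s := by
  split_ifs
  · exact min_le_right _ _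
  · exact min_le_left _ _

lemma ite_half_lt_eq_min {s W : ℝ} (P : Prop) [Decidable P] (hP : P ↔ W / 2 < s) :
    (if P then W - s else s) = min s (W - s) := by
  split_ifs with h
  · rw [min_eq_right (by linarith [hP.mp h])]
  · rw [min_eq_left (by linarith [not_lt.mp (mt hP.mpr h)])]

lemma sum_min_le_rfObj (hw : ∀ k, 0 ≤ w k) (X : Finset (Finset L)) :
    ∑ c ∈ Finset.univ.biUnion C, min (supp w C c) ((∑ k, w k) - supp w C c) ≤ rfObj w C X := by
  have hCU : ∀ k, C k ⊆ X ∪ Finset.univ.biUnion C := fun k =>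
    (Finset.subset_biUnion_of_mem C (Finset.mem_univ k)).trans Finset.subset_union_right
  rw [rfObj_eq_sum_ite w C Finset.subset_union_left hCU]
  calc ∑ c ∈ Finset.univ.biUnion C, min (supp w C c) ((∑ k, w k) - supp w C c)
      ≤ ∑ c ∈ X ∪ Finset.univ.biUnion C, min (supp w C c) ((∑ k, w k) - supp w C c) :=
        Finset.sum_le_sum_of_subset_of_nonneg Finset.subset_union_right fun c _ _ =>
          le_min (supp_nonneg w C hw c) (by linarith [supp_le_sum w C hw c])
    _ ≤ _ := Finset.sum_le_sum fun c _ => min_le_ite _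

lemma rfObj_filter_half_lt_supp (U : Finset (Finset L)) (hCU : ∀ k, C k ⊆ U) :
    rfObj w C (U.filter fun c => (∑ k, w k) / 2 < supp w C c) =
      ∑ c ∈ U, min (supp w C c) ((∑ k, w k) - supp w C c) := by
  rw [rfObj_eq_sum_ite w C (Finset.filter_subset _ U) hCU]
  exact Finset.sum_congr rfl fun c hc =>
    ite_half_lt_eq_min _ (by simp only [Finset.mem_filter, hc, true_and])

end WeightedRF

open WeightedRF in
theorem majority_set_minimizes_general {L : Type*} [DecidableEq L] {p : ℕ}
    (w : Fin p → ℝ) (C : Fin p → Finset (Finset L))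
    (hw : ∀ k, 0 < w k)
    (hClam : ∀ k, laminar (C k)) :
    laminar ((Finset.univ.biUnion C).filter
        (fun c => (∑ k, w k) / 2 < supp w C c)) ∧
    rfObj w C ((Finset.univ.biUnion C).filter
        (fun c => (∑ k, w k) / 2 < supp w C c)) =
      ∑ c ∈ Finset.univ.biUnion C,
        min (supp w C c) ((∑ k, w k) - supp w C c) ∧
    ∀ X : Finset (Finset L), (∀ c ∈ X, c.Nonempty) →
      rfObj w C ((Finset.univ.biUnion C).filter
        (fun c => (∑ k, w k) / 2 < supp w C c)) ≤ rfObj w C X := by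
  have hw' : ∀ k, 0 ≤ w k := fun k => (hw k).le
  have hCU : ∀ k, C k ⊆ Finset.univ.biUnion C := fun k =>
    Finset.subset_biUnion_of_mem C (Finset.mem_univ k)
  have hvalue := rfObj_filter_half_lt_supp w C _ hCU
  exact ⟨laminar_filter_half_lt_supp w C hw' hClam _, hvalue,
    fun X _ => hvalue ▸ sum_min_le_rfObj w C hw' X⟩

/-- the minimum of the weighted RF objective over all cluster sets
equals `Σ_{c ∈ C₁ ∪ … ∪ C_p} min(s(c), W − s(c))`, and is attained by the laminar
majority set `M⁺ = {c ∈ C₁ ∪ … ∪ C_p : s(c) > W/2}`; in particular the minimum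
over all cluster sets coincides with the minimum over laminar cluster sets. -/
theorem majority_set_minimizes {L : Type*} [DecidableEq L] {p : ℕ}
    (w : Fin p → ℝ) (C : Fin p → Finset (Finset L))
    (hw : ∀ k, 0 < w k) (hCne : ∀ k, ∀ c ∈ C k, c.Nonempty)
    (hClam : ∀ k, laminar (C k)) :
    laminar ((Finset.univ.biUnion C).filter
        (fun c => (∑ k, w k) / 2 < supp w C c)) ∧
    rfObj w C ((Finset.univ.biUnion C).filter
        (fun c => (∑ k, w k) / 2 < supp w C c)) =
      ∑ c ∈ Finset.univ.biUnion C,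
        min (supp w C c) ((∑ k, w k) - supp w C c) ∧
    ∀ X : Finset (Finset L), (∀ c ∈ X, c.Nonempty) →
      rfObj w C ((Finset.univ.biUnion C).filter
        (fun c => (∑ k, w k) / 2 < supp w C c)) ≤ rfObj w C X :=
  majority_set_minimizes_general w C hw hClam
end
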